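/- The DSE discrepancy is rotation-invariant: for any orthogonal matrices R ∈ O(p) and Q ∈ O(q), DSE_r(R#μ, Q#ν) = DSE_r(μ, ν). -/

import Mathlib

open MeasureTheory ENNReal Real
open scoped RealInnerProductSpace

noncomputable section

abbrev Euc (n : ℕ) := EuclideanSpace ℝ (Fin n)
abbrev Sph (n : ℕ) := Metric.sphere (0 : Euc n) 1

/-- Set of couplings of two measures. -/
def couplings {X Y : Type*} [MeasurableSpace X] [MeasurableSpace Y]
    (μ : Measure X) (ν : Measure Y) : Set (Measure (X × Y)) :=
  {γ | γ.map Prod.fst = μ ∧ γ.map Prod.snd = ν}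

/-- `r`-Wasserstein distance on ℝ, raised to the power `r`. -/
def Wrr (r : ℝ) (α β : Measure ℝ) : ℝ≥0∞ :=
  ⨅ γ ∈ couplings α β, ∫⁻ p, ENNReal.ofReal (|p.1 - p.2| ^ r) ∂γ

/-- Pushforward of a measure on `ℝ^n` by the projection `x ↦ ⟪u, x⟫`. -/
def proj {n : ℕ} (u : Euc n) (μ : Measure (Euc n)) : Measure ℝ :=
  μ.map (fun x => ⟪u, x⟫)

/-- Admissible set of slicing distributions for an embedding `φ` with constant `C`. -/
def Mset {d n : ℕ} (φ : Sph d → Sph n) (C : ℝ) : Set (Measure (Sph d)) :=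
  {Θ | IsProbabilityMeasure Θ ∧
    ∫⁻ p, ENNReal.ofReal (abs ⟪(φ p.1 : Euc n), (φ p.2 : Euc n)⟫) ∂(Θ.prod Θ) ≤ ENNReal.ofReal C}

/-- Distributional sliced embedding discrepancy. -/
def DSE (d p q : ℕ) (r C₁ C₂ : ℝ) (μ : Measure (Euc p)) (ν : Measure (Euc q)) : ℝ≥0∞ :=
  ⨅ (φ : Sph d → Sph p) (ψ : Sph d → Sph q),
    ⨆ Θ ∈ Mset φ C₁ ∩ Mset ψ C₂,
      (∫⁻ θ, Wrr r (proj (φ θ : Euc p) μ) (proj (ψ θ : Euc q) ν) ∂Θ) ^ (1 / r)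

/-- The uniform (normalized surface) probability measure on the unit sphere of `ℝ^d`. -/
def uniformSphere (d : ℕ) : Measure (Sph d) :=
  ((volume : Measure (Euc d)).toSphere Set.univ)⁻¹ • (volume : Measure (Euc d)).toSphere

def LinearIsometryEquiv.sphereEquiv {𝕜 E : Type*} [Semiring 𝕜] [SeminormedAddCommGroup E]
    [Module 𝕜 E] (R : E ≃ₗᵢ[𝕜] E) (r : ℝ) : Metric.sphere (0 : E) r ≃ Metric.sphere (0 : E) r :=
  R.toEquiv.subtypeEquiv fun x => by simp

@[simp]
lemma LinearIsometryEquiv.coe_sphereEquiv_apply {𝕜 E : Type*} [Semiring 𝕜]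
    [SeminormedAddCommGroup E] [Module 𝕜 E] (R : E ≃ₗᵢ[𝕜] E) (r : ℝ)
    (x : Metric.sphere (0 : E) r) : (R.sphereEquiv r x : E) = R x :=
  rfl

lemma proj_map {n : ℕ} (R : Euc n ≃ₗᵢ[ℝ] Euc n) (u : Euc n) (μ : Measure (Euc n)) :
    proj u (μ.map R) = proj (R.symm u) μ := by
  have hmeas : Measurable fun x : Euc n => ⟪u, x⟫ := (continuous_const.inner continuous_id).measurable
  rw [proj, proj, Measure.map_map hmeas R.continuous.measurable]
  congr 1
  ext x
  simp [← R.inner_map_map (R.symm u) x]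

lemma Mset_sphereEquiv_comp {d n : ℕ} (R : Euc n ≃ₗᵢ[ℝ] Euc n) (φ : Sph d → Sph n) (C : ℝ) :
    Mset (R.sphereEquiv 1 ∘ φ) C = Mset φ C := by
  simp [Mset, R.inner_map_map]

def DSEOf {d p q : ℕ} (r C₁ C₂ : ℝ) (φ : Sph d → Sph p) (ψ : Sph d → Sph q)
    (μ : Measure (Euc p)) (ν : Measure (Euc q)) : ℝ≥0∞ :=
  ⨆ Θ ∈ Mset φ C₁ ∩ Mset ψ C₂,
    (∫⁻ θ, Wrr r (proj (φ θ : Euc p) μ) (proj (ψ θ : Euc q) ν) ∂Θ) ^ (1 / r)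

lemma DSE_eq_iInf_DSEOf (d p q : ℕ) (r C₁ C₂ : ℝ) (μ : Measure (Euc p)) (ν : Measure (Euc q)) :
    DSE d p q r C₁ C₂ μ ν = ⨅ (φ : Sph d → Sph p) (ψ : Sph d → Sph q), DSEOf r C₁ C₂ φ ψ μ ν :=
  rfl

lemma DSEOf_map {d p q : ℕ} (r C₁ C₂ : ℝ) (φ : Sph d → Sph p) (ψ : Sph d → Sph q)
    (μ : Measure (Euc p)) (ν : Measure (Euc q))
    (R : Euc p ≃ₗᵢ[ℝ] Euc p) (Q : Euc q ≃ₗᵢ[ℝ] Euc q) :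
    DSEOf r C₁ C₂ φ ψ (μ.map R) (ν.map Q) =
      DSEOf r C₁ C₂ (R.symm.sphereEquiv 1 ∘ φ) (Q.symm.sphereEquiv 1 ∘ ψ) μ ν := by
  simp only [DSEOf, Mset_sphereEquiv_comp, proj_map]
  rfl

/-- Embeddings are admissible up to orthogonal maps, so rotating the measures amounts to
reindexing the infimum over `(φ, ψ)` by `(Rᵀ ∘ φ, Qᵀ ∘ ψ)`. -/
theorem stmt13_general (d p q : ℕ) (r C₁ C₂ : ℝ)
    (μ : Measure (Euc p)) (ν : Measure (Euc q))
    (R : Euc p ≃ₗᵢ[ℝ] Euc p) (Q : Euc q ≃ₗᵢ[ℝ] Euc q) :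
    DSE d p q r C₁ C₂ (μ.map R) (ν.map Q) = DSE d p q r C₁ C₂ μ ν := by
  let rotP := Equiv.arrowCongr (Equiv.refl (Sph d)) (R.symm.sphereEquiv 1)
  let rotQ := Equiv.arrowCongr (Equiv.refl (Sph d)) (Q.symm.sphereEquiv 1)
  simp only [DSE_eq_iInf_DSEOf, DSEOf_map]
  calc ⨅ φ, ⨅ ψ, DSEOf r C₁ C₂ (rotP φ) (rotQ ψ) μ ν
      = ⨅ φ, ⨅ ψ, DSEOf r C₁ C₂ (rotP φ) ψ μ ν :=
        iInf_congr fun φ => rotQ.iInf_comp (g := fun ψ => DSEOf r C₁ C₂ (rotP φ) ψ μ ν)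
    _ = ⨅ φ, ⨅ ψ, DSEOf r C₁ C₂ φ ψ μ ν :=
        rotP.iInf_comp (g := fun φ => ⨅ ψ, DSEOf r C₁ C₂ φ ψ μ ν)

/-- DSE is rotation invariant. -/
theorem stmt13 (d p q : ℕ) (r C₁ C₂ : ℝ) (hr : 1 ≤ r)
    (μ : Measure (Euc p)) (ν : Measure (Euc q))
    [IsProbabilityMeasure μ] [IsProbabilityMeasure ν]
    (R : Euc p ≃ₗᵢ[ℝ] Euc p) (Q : Euc q ≃ₗᵢ[ℝ] Euc q) :
    DSE d p q r C₁ C₂ (μ.map R) (ν.map Q) = DSE d p q r C₁ C₂ μ ν :=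
  stmt13_general d p q r C₁ C₂ μ ν R Q
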